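/- arXiv:1507.04976 — 4 statements merged into one kernel-verified Lean document; each statement's English description precedes it below -/
import Mathlib

section
/- Let n ≥ 2 and let x_1, x_2, …, x_n be elements of a commutative ℚ-algebra (e.g. rational polynomial variables). Then r_{[n]}(x_1,…,x_n) = 2^{n−1}·r_{[n]}(x_1/2,…,x_n/2) + Σ_S r_S(x)·r_{[n]∖S}(x), where the sum runs over all subsets S of [n] = {1,…,n} with 1 ∈ S and S ≠ [n]. -/
/-!
Write `r⁽ᶜ⁾_S` (`rSOffset c`) for `r_S` with every factor `(… - 1)` replaced by `(… - c)`;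
homogeneity gives `r⁽²⁾_S(x) = 2^{|S|-1} r_S(x/2)`. So it suffices to show
`r_S = r⁽²⁾_S + Σ_{min S ∈ T ⊊ S} r_T r_{S∖T}` for every finite `S`, by induction adding a new
minimum `m` below `S'`. Writing `T = {m} ∪ U` with `U ⊊ S'`, the term `U = ∅` is `r_{S'}`, and
since `r_{{m} ∪ U} = (Σ_U x - 1) r_U`, pairing `U` with `S' ∖ U` turns the remaining terms into
`(σ - 2) Σ_{min S' ∈ U ⊊ S'} r_U r_{S'∖U}` with `σ = Σ_{S'} x`. As `r_S = (σ - 1) r_{S'}` and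
`r⁽²⁾_S = (σ - 2) r⁽²⁾_{S'}`, the induction hypothesis for `S'` closes the identity.
-/

/-- For a finite set `S = {i_1 < i_2 < … < i_k}` of naturals and values `x`,
`r_S(x) = (x_{i_2} + ⋯ + x_{i_k} - 1)(x_{i_3} + ⋯ + x_{i_k} - 1) ⋯ (x_{i_k} - 1)`,
i.e. the product over the non-minimal elements `i` of `S` of
`(Σ_{j ∈ S, j ≥ i} x_j) - 1`; in particular `r_S = 1` when `|S| ≤ 1`. -/
def rS {R : Type*} [CommRing R] (S : Finset ℕ) (x : ℕ → R) : R :=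
  ∏ i ∈ S.filter fun i => ∃ j ∈ S, j < i, ((∑ j ∈ S.filter fun j => i ≤ j, x j) - 1)

open Finset

section Combinatorics

variable {α : Type*} [DecidableEq α]

theorem sum_filter_mem_ne_insert_eq_sum_ssubsets {M : Type*} [AddCommMonoid M] {m : α}
    {S : Finset α} (hm : m ∉ S) (f : Finset α → Finset α → M) :
    ∑ T ∈ (insert m S).powerset.filter (fun T => m ∈ T ∧ T ≠ insert m S),
        f T (insert m S \ T) =
      ∑ T ∈ S.ssubsets, f (insert m T) (S \ T) := by
  have hmT {T : Finset α} (hT : T ⊆ S) : m ∉ T := fun h => hm (hT h)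
  refine sum_nbij' (fun T => T.erase m) (insert m) ?_ ?_ ?_ ?_ ?_
  · simp only [mem_filter, mem_powerset, mem_ssubsets]
    rintro T ⟨hTS, hmT, hne⟩
    refine Finset.ssubset_iff_subset_ne.2 ⟨subset_insert_iff.1 hTS, fun h => hne ?_⟩
    rw [← h, insert_erase hmT]
  · simp only [mem_filter, mem_powerset, mem_ssubsets]
    intro T hT
    exact ⟨insert_subset_insert m hT.subset, mem_insert_self m T,
      fun h => hT.ne (by rw [← erase_insert (hmT hT.subset), h, erase_insert hm])⟩
  · simp only [mem_filter]
    exact fun T hT => insert_erase hT.2.1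
  · simp only [mem_ssubsets]
    exact fun T hT => erase_insert (hmT hT.subset)
  · simp only [mem_filter, mem_powerset]
    intro T hT
    rw [insert_erase hT.2.1]
    congr 1
    ext j
    simp only [mem_sdiff, mem_insert, mem_erase]
    grind

theorem sum_nonempty_ssubsets_eq_sum_add_compl {M : Type*} [AddCommMonoid M] {a : α}
    {S : Finset α} (ha : a ∈ S) (f : Finset α → M) :
    ∑ T ∈ S.ssubsets.erase ∅, f T =
      ∑ T ∈ S.powerset.filter (fun T => a ∈ T ∧ T ≠ S), (f T + f (S \ T)) := by
  rw [sum_add_distrib, ← sum_filter_add_sum_filter_not _ (fun T => a ∈ T)]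
  congr 1
  · refine sum_congr (ext fun T => ?_) fun _ _ => rfl
    simp only [mem_filter, mem_erase, mem_ssubsets, mem_powerset]
    grind
  · refine sum_nbij' (S \ ·) (S \ ·) ?_ ?_ ?_ ?_ ?_
    · simp only [mem_filter, mem_erase, mem_ssubsets, mem_powerset]
      grind
    · simp only [mem_filter, mem_erase, mem_ssubsets, mem_powerset]
      grind
    · simp only [mem_filter, mem_erase, mem_ssubsets]
      exact fun T hT => Finset.sdiff_sdiff_eq_self hT.1.2.subset
    · simp only [mem_filter, mem_powerset]
      exact fun T hT => Finset.sdiff_sdiff_eq_self hT.1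
    · simp only [mem_filter, mem_erase, mem_ssubsets]
      exact fun T hT => by rw [Finset.sdiff_sdiff_eq_self hT.1.2.subset]

end Combinatorics

section LinearOrder

variable {α : Type*} [LinearOrder α]

theorem filter_exists_lt_eq_erase {S : Finset α} {m : α} (hm : m ∈ S) (hmin : ∀ j ∈ S, m ≤ j) :
    S.filter (fun i => ∃ j ∈ S, j < i) = S.erase m := by
  ext i
  simp only [mem_filter, mem_erase]
  constructor
  · rintro ⟨hi, j, hj, hji⟩
    exact ⟨(lt_of_le_of_lt (hmin j hj) hji).ne', hi⟩
  · rintro ⟨hne, hi⟩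
    exact ⟨hi, m, hm, lt_of_le_of_ne (hmin i hi) (Ne.symm hne)⟩

theorem card_filter_exists_lt (S : Finset α) :
    #(S.filter fun i => ∃ j ∈ S, j < i) = #S - 1 := by
  rcases S.eq_empty_or_nonempty with rfl | hS
  · simp
  · rw [filter_exists_lt_eq_erase (S.min'_mem hS) (S.min'_le ·), card_erase_of_mem (S.min'_mem hS)]

end LinearOrder

section RS

variable {R : Type*} [CommRing R]

def rSOffset (c : R) (S : Finset ℕ) (x : ℕ → R) : R :=
  ∏ i ∈ S.filter fun i => ∃ j ∈ S, j < i, ((∑ j ∈ S.filter fun j => i ≤ j, x j) - c)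

theorem rS_eq_rSOffset_one (S : Finset ℕ) (x : ℕ → R) : rS S x = rSOffset 1 S x := rfl

theorem rSOffset_singleton (c : R) (m : ℕ) (x : ℕ → R) : rSOffset c {m} x = 1 := by
  rw [rSOffset, filter_exists_lt_eq_erase (mem_singleton_self m) (by simp), erase_singleton,
    prod_empty]

theorem rSOffset_insert_of_forall_lt (c : R) {m : ℕ} {T : Finset ℕ} (hm : ∀ j ∈ T, m < j)
    (x : ℕ → R) :
    rSOffset c (insert m T) x = ∏ i ∈ T, ((∑ j ∈ T.filter fun j => i ≤ j, x j) - c) := by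
  have hmin : ∀ j ∈ insert m T, m ≤ j := by
    simpa using fun j hj => (hm j hj).le
  rw [rSOffset, filter_exists_lt_eq_erase (mem_insert_self m T) hmin,
    erase_insert fun h => (hm m h).false]
  refine prod_congr rfl fun i hi => ?_
  rw [filter_insert, if_neg (hm i hi).not_ge]

theorem prod_sum_filter_le_sub_eq_mul_rSOffset (c : R) {T : Finset ℕ} (hT : T.Nonempty)
    (x : ℕ → R) :
    ∏ i ∈ T, ((∑ j ∈ T.filter fun j => i ≤ j, x j) - c) =
      ((∑ j ∈ T, x j) - c) * rSOffset c T x := by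
  rw [rSOffset, filter_exists_lt_eq_erase (T.min'_mem hT) (T.min'_le ·),
    ← mul_prod_erase T _ (T.min'_mem hT), filter_true_of_mem (T.min'_le ·)]

theorem rSOffset_insert_of_forall_lt_of_nonempty (c : R) {m : ℕ} {T : Finset ℕ}
    (hm : ∀ j ∈ T, m < j) (hT : T.Nonempty) (x : ℕ → R) :
    rSOffset c (insert m T) x = ((∑ j ∈ T, x j) - c) * rSOffset c T x := by
  rw [rSOffset_insert_of_forall_lt c hm, prod_sum_filter_le_sub_eq_mul_rSOffset c hT]

theorem rS_singleton (m : ℕ) (x : ℕ → R) : rS {m} x = 1 :=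
  rSOffset_singleton 1 m x

theorem rS_insert_of_forall_lt_of_nonempty {m : ℕ} {T : Finset ℕ} (hm : ∀ j ∈ T, m < j)
    (hT : T.Nonempty) (x : ℕ → R) : rS (insert m T) x = ((∑ j ∈ T, x j) - 1) * rS T x :=
  rSOffset_insert_of_forall_lt_of_nonempty 1 hm hT x

theorem rSOffset_mul_mul (a c : R) (S : Finset ℕ) (x : ℕ → R) :
    rSOffset (a * c) S (fun i => a * x i) = a ^ (#S - 1) * rSOffset c S x := by
  rw [rSOffset, rSOffset, ← card_filter_exists_lt S, mul_comm (a ^ _), prod_mul_pow_card]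
  refine prod_congr rfl fun i _ => ?_
  rw [← mul_sum]
  ring

theorem sum_nonempty_ssubsets_rS_insert_mul {m a : ℕ} {S : Finset ℕ} (hm : ∀ j ∈ S, m < j)
    (ha : a ∈ S) (x : ℕ → R) :
    ∑ T ∈ S.ssubsets.erase ∅, rS (insert m T) x * rS (S \ T) x =
      ((∑ j ∈ S, x j) - 2) *
        ∑ T ∈ S.powerset.filter (fun T => a ∈ T ∧ T ≠ S), rS T x * rS (S \ T) x := by
  rw [sum_nonempty_ssubsets_eq_sum_add_compl ha, mul_sum]
  refine sum_congr rfl fun T hT => ?_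
  obtain ⟨hTS, haT, hTne⟩ : T ⊆ S ∧ a ∈ T ∧ T ≠ S := by simpa using hT
  have hT : T.Nonempty := ⟨a, haT⟩
  have hST : (S \ T).Nonempty := sdiff_nonempty.2 fun h => hTne (hTS.antisymm h)
  rw [rS_insert_of_forall_lt_of_nonempty (fun j hj => hm j (hTS hj)) hT,
    rS_insert_of_forall_lt_of_nonempty (fun j hj => hm j (sdiff_subset hj)) hST,
    Finset.sdiff_sdiff_eq_self hTS, ← sum_sdiff hTS]
  ring

theorem rS_insert_eq_rSOffset_two_add_sum {m : ℕ} {S : Finset ℕ} (hm : ∀ j ∈ S, m < j)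
    (x : ℕ → R) :
    rS (insert m S) x = rSOffset 2 (insert m S) x +
      ∑ T ∈ (insert m S).powerset.filter (fun T => m ∈ T ∧ T ≠ insert m S),
        rS T x * rS (insert m S \ T) x := by
  induction S using Finset.induction_on_min generalizing m with
  | empty =>
    rw [sum_filter_mem_ne_insert_eq_sum_ssubsets (notMem_empty m) (fun T U => rS T x * rS U x)]
    simp [rS_singleton, rSOffset_singleton, ssubsets]
  | insert a s has ih =>
    have hmS : m ∉ insert a s := fun h => (hm m h).false
    have hS : (insert a s).Nonempty := insert_nonempty a s
    rw [sum_filter_mem_ne_insert_eq_sum_ssubsets hmS (fun T U => rS T x * rS U x),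
      ← add_sum_erase _ _ (empty_mem_ssubsets hS), sum_nonempty_ssubsets_rS_insert_mul hm
        (mem_insert_self a s), rS_insert_of_forall_lt_of_nonempty hm hS,
      rSOffset_insert_of_forall_lt_of_nonempty 2 hm hS, insert_empty_eq, sdiff_empty,
      rS_singleton, one_mul]
    linear_combination (∑ j ∈ insert a s, x j - 2) * ih has

theorem rSOffset_two_eq_pow_mul_rS_half [Algebra ℚ R] (S : Finset ℕ) (x : ℕ → R) :
    rSOffset 2 S x = 2 ^ (#S - 1) * rS S (fun i => (2⁻¹ : ℚ) • x i) := by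
  have two_mul_half (y : R) : 2 * ((2⁻¹ : ℚ) • y) = y := by
    rw [two_mul, ← add_smul]
    norm_num
  simpa only [mul_one, two_mul_half, rS_eq_rSOffset_one] using
    rSOffset_mul_mul 2 1 S (fun i => (2⁻¹ : ℚ) • x i)

end RS

/-- **Lemma 7**: for `n ≥ 2` and elements `x_1, …, x_n` of a commutative `ℚ`-algebra,
`r_{[n]}(x) = 2^{n-1} r_{[n]}(x/2) + Σ_{1 ∈ S ⊊ [n]} r_S(x) · r_{[n] ∖ S}(x)`,
where `[n] = {1, …, n}`. -/
theorem rS_recurrence {R : Type*} [CommRing R] [Algebra ℚ R] (n : ℕ) (hn : 2 ≤ n)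
    (x : ℕ → R) :
    rS (Finset.Icc 1 n) x =
      2 ^ (n - 1) * rS (Finset.Icc 1 n) (fun i => (2⁻¹ : ℚ) • x i) +
        ∑ S ∈ (Finset.Icc 1 n).powerset.filter fun S => 1 ∈ S ∧ S ≠ Finset.Icc 1 n,
          rS S x * rS (Finset.Icc 1 n \ S) x := by
  have key := rS_insert_eq_rSOffset_two_add_sum (m := 1) (S := Icc 2 n)
    (fun j hj => (mem_Icc.1 hj).1) x
  rw [show insert 1 (Icc 2 n) = Icc 1 n from insert_Icc_add_one_left_eq_Icc (by omega)] at key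
  rw [key, rSOffset_two_eq_pow_mul_rS_half, Nat.card_Icc, Nat.add_sub_cancel]
end

section
/- For every n ≥ 1, Σ_λ P_2(λ)/z_λ (sum over binary partitions λ of n) equals (C_{n−1}² · n!/4^{n−1}) · Σ_μ n(n−1)⋯(n−|μ|+1) / ( z_μ · ∏_{i=1}^{ℓ(μ)} ∏_{j=1}^{μ_i−1} (2n − 2(μ_1+⋯+μ_{i−1}) − 2j − 1)² ), where the second sum runs over all binary partitions μ (including the empty partition, whose summand is 1) with every part equal to a power of 2 that is at least 2 and with |μ| ≤ n. -/
/-- `z_λ = ∏_i i^{m_i} · m_i!` for a partition with `m_i` parts equal to `i`,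
presented as a multiset of parts. -/
def partZ (M : Multiset ℕ) : ℕ :=
  M.prod * (M.dedup.map fun i => (M.count i).factorial).prod

/-- `P_k(λ) = ∏_{i=2}^{ℓ} (2(λ_i + ⋯ + λ_ℓ) - 1)^k` for a partition
`λ_1 ≥ λ_2 ≥ ⋯ ≥ λ_ℓ`, presented as a multiset of parts: the tail sums of the
decreasing arrangement are the prefix sums of the increasing arrangement. -/
def partP (k : ℕ) (M : Multiset ℕ) : ℕ :=
  ∏ j ∈ Finset.range ((M.sort (· ≤ ·)).length - 1),
    (2 * ((M.sort (· ≤ ·)).take (j + 1)).sum - 1) ^ k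

/-- `Σ_λ P_k(λ)/z_λ`, the sum over binary partitions `λ` of `n`; by Theorem 1 of the
paper this is the number of tangled chains of length `k` (for `k = 2`, tanglegrams). -/
noncomputable def binPartSum (k n : ℕ) : ℚ :=
  ∑ᶠ (mu : n.Partition) (_ : ∀ p ∈ mu.parts, ∃ i : ℕ, p = 2 ^ i),
    (partP k mu.parts : ℚ) / (partZ mu.parts : ℚ)

/-!
Removing the parts equal to `1` identifies a binary partition `λ` of `n` with a multiset `μ` of
powers of `2` that are at least `2` and have `|μ| ≤ n`; then `z_λ = (n - |μ|)! z_μ`. Arrange `λ`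
increasingly. Every `s ∈ {1, …, n-1}` is either a proper partial sum of `λ`, contributing
`(2s-1)²` to `P_2(λ)`, or lies strictly inside a part `μ_i`, contributing to the product in the
denominator; the ones have no interior. Hence that product times `P_2(λ)` is
`∏_{s=1}^{n-1} (2s-1)² = ((2n-3)‼)²`, and `C_{n-1}² n!/4^{n-1} = ((2n-3)‼)²/n!`.
-/

open Finset Nat

def oddSq (k : ℕ) : ℚ := ∏ m ∈ range k, (2 * (m : ℚ) + 1) ^ 2

lemma oddSq_pos (k : ℕ) : 0 < oddSq k :=
  prod_pos fun m _ => by positivity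

-- The truncated `s - 1` is harmless at `s = 0`, since `(2 * 0 - 1) ^ 2 = 1`.
lemma oddSq_pred_mul (s : ℕ) : oddSq (s - 1) * (2 * (s : ℚ) - 1) ^ 2 = oddSq s := by
  cases s with
  | zero => norm_num [oddSq]
  | succ s => rw [oddSq, Nat.add_sub_cancel, oddSq, prod_range_succ]; push_cast; ring

lemma oddSq_mul_prod_range (s a : ℕ) (ha : 1 ≤ a) :
    oddSq s * ∏ j ∈ range (a - 1), (2 * ((s + a : ℕ) : ℚ) - 2 * ((j : ℚ) + 1) - 1) ^ 2 =
      oddSq (s + a - 1) := by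
  obtain ⟨b, rfl⟩ : ∃ b, a = b + 1 := ⟨a - 1, by omega⟩
  rw [oddSq, oddSq, Nat.add_sub_cancel, ← add_assoc, Nat.add_sub_cancel, prod_range_add,
    ← prod_range_reflect _ b]
  congr 1
  refine prod_congr rfl fun j hj => ?_
  have hj : j < b := mem_range.1 hj
  push_cast [Nat.sub_sub, Nat.cast_sub (show 1 + j ≤ b by omega)]
  ring

lemma centralBinom_mul_factorial (k : ℕ) :
    centralBinom k * k ! = 2 ^ k * ∏ m ∈ range k, (2 * m + 1) := by
  induction k with
  | zero => rfl
  | succ k ih =>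
    rw [factorial_succ, ← mul_assoc, mul_comm _ (k + 1), succ_mul_centralBinom_succ, mul_assoc,
      ih, prod_range_succ, pow_succ]
    ring

lemma catalan_sq_mul_factorial_div_four_pow (n : ℕ) :
    (catalan (n - 1) : ℚ) ^ 2 * n ! / 4 ^ (n - 1) = oddSq (n - 1) / n ! := by
  cases n with
  | zero => simp [oddSq]
  | succ k =>
    have h := congrArg (fun m : ℕ => ((m : ℚ)) ^ 2) (centralBinom_mul_factorial k)
    rw [← succ_mul_catalan_eq_centralBinom] at h
    push_cast at h
    rw [Nat.add_sub_cancel, oddSq, prod_pow, factorial_succ,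
      show (4 : ℚ) ^ k = (2 ^ k) ^ 2 by rw [← pow_mul, mul_comm, pow_mul]; norm_num,
      div_eq_div_iff (by positivity) (by positivity)]
    push_cast
    linear_combination h

def prefixSq (L : List ℕ) : ℚ :=
  ∏ j ∈ range (L.length - 1), (2 * ((L.take (j + 1)).sum : ℚ) - 1) ^ 2

/-- For `R` the decreasing arrangement of a partition of `x`, the factors are the `(2s-1)²` with
`s` strictly inside a part, i.e. the `s < x` that are not partial sums of the increasing
arrangement. For `x = n` this is the denominator product of the theorem. -/
def gapSq (x : ℚ) (R : List ℕ) : ℚ :=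
  ∏ i ∈ range R.length, ∏ j ∈ range (R.getD i 0 - 1),
    (2 * x - 2 * ((R.take i).sum : ℚ) - 2 * ((j : ℚ) + 1) - 1) ^ 2

lemma prefixSq_append_singleton (L : List ℕ) (a : ℕ) :
    prefixSq (L ++ [a]) = prefixSq L * (2 * (L.sum : ℚ) - 1) ^ 2 := by
  obtain rfl | ⟨k, hk⟩ : L = [] ∨ ∃ k, L.length = k + 1 := by
    cases L <;> simp
  · simp [prefixSq]
  · rw [prefixSq, prefixSq, List.length_append, List.length_singleton, hk, Nat.add_sub_cancel,
      Nat.add_sub_cancel, prod_range_succ]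
    congr 1
    · refine prod_congr rfl fun j hj => ?_
      rw [List.take_append_of_le_length (by simp at hj; omega)]
    · rw [← hk, List.take_append_of_le_length le_rfl, List.take_length]

lemma gapSq_cons (x : ℚ) (a : ℕ) (R : List ℕ) :
    gapSq x (a :: R) =
      (∏ j ∈ range (a - 1), (2 * x - 2 * ((j : ℚ) + 1) - 1) ^ 2) * gapSq (x - a) R := by
  rw [gapSq, List.length_cons, prod_range_succ', mul_comm, gapSq]
  congr 1
  · simp
  · refine prod_congr rfl fun i _ => prod_congr rfl fun j _ => ?_
    simp only [List.take_succ_cons, List.sum_cons, Nat.cast_add]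
    ring

lemma prefixSq_mul_gapSq_reverse (L : List ℕ) (hL : ∀ p ∈ L, 0 < p) :
    prefixSq L * gapSq L.sum L.reverse = oddSq (L.sum - 1) := by
  induction L using List.reverseRecOn with
  | nil => simp [prefixSq, gapSq, oddSq]
  | append_singleton L a ih =>
    have ha : 1 ≤ a := hL a (by simp)
    have ih := ih fun p hp => hL p (by simp [hp])
    rw [prefixSq_append_singleton, List.reverse_append, List.reverse_singleton,
      List.singleton_append, gapSq_cons, List.sum_append, List.sum_singleton, Nat.cast_add,
      add_sub_cancel_right, ← oddSq_mul_prod_range _ _ ha, ← oddSq_pred_mul, ← ih]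
    push_cast
    ring

lemma partP_two_eq_prefixSq (M : Multiset ℕ) (hM : ∀ p ∈ M, 0 < p) :
    (partP 2 M : ℚ) = prefixSq (M.sort (· ≤ ·)) := by
  rw [partP, prefixSq, Nat.cast_prod]
  refine prod_congr rfl fun j hj => ?_
  have hj : j < (M.sort (· ≤ ·)).length := by simp at hj ⊢; omega
  have hsum : 0 < ((M.sort (· ≤ ·)).take (j + 1)).sum := by
    rw [List.take_succ_eq_append_getElem hj, List.sum_append, List.sum_singleton]
    exact Nat.add_pos_right _ (hM _ ((Multiset.mem_sort _).1 (List.getElem_mem hj)))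
  push_cast [Nat.cast_sub (show 1 ≤ 2 * ((M.sort (· ≤ ·)).take (j + 1)).sum by omega)]
  rfl

lemma Multiset.sort_replicate_add {α : Type*} [LinearOrder α] (M : Multiset α) (a : α)
    (ha : ∀ p ∈ M, a ≤ p) (r : ℕ) :
    (Multiset.replicate r a + M).sort (· ≤ ·) = List.replicate r a ++ M.sort (· ≤ ·) := by
  induction r with
  | zero => simp
  | succ r ih =>
    rw [Multiset.replicate_succ, Multiset.cons_add, Multiset.sort_cons, ih,
      List.replicate_succ, List.cons_append]
    intro b hb
    rcases Multiset.mem_add.1 hb with hb | hb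
    · rw [Multiset.eq_of_mem_replicate hb]
    · exact ha b hb

lemma gapSq_append_replicate_one (x : ℚ) (R : List ℕ) (r : ℕ) :
    gapSq x (R ++ List.replicate r 1) = gapSq x R := by
  induction R generalizing x with
  | nil =>
    refine prod_eq_one fun i hi => ?_
    simp_all
  | cons a R ih => rw [List.cons_append, gapSq_cons, gapSq_cons, ih]

lemma partZ_pos (M : Multiset ℕ) (hM : 0 ∉ M) : 0 < partZ M :=
  Nat.mul_pos (Multiset.prod_pos fun p hp => Nat.pos_of_ne_zero fun h => hM (h ▸ hp))
    (Multiset.prod_pos fun _ h => by obtain ⟨i, -, rfl⟩ := Multiset.mem_map.1 h; positivity)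

lemma partZ_replicate_one_add (M : Multiset ℕ) (hM : 1 ∉ M) (r : ℕ) :
    partZ (Multiset.replicate r 1 + M) = r ! * partZ M := by
  rcases Nat.eq_zero_or_pos r with rfl | hr
  · simp
  have htoFinset : (Multiset.replicate r 1 + M).toFinset = insert 1 M.toFinset := by
    rw [Multiset.toFinset_add, Multiset.toFinset_replicate, if_neg hr.ne', Finset.insert_eq]
  have hcount (i : ℕ) (hi : i ∈ M.toFinset) :
      (Multiset.replicate r 1 + M).count i = M.count i := by
    rw [Multiset.count_add, Multiset.count_replicate, if_neg (by rintro rfl; simp_all), zero_add]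
  change _ * ∏ i ∈ (Multiset.replicate r 1 + M).toFinset, _ =
    _ * (_ * ∏ i ∈ M.toFinset, (M.count i)!)
  rw [htoFinset, prod_insert (by simpa using hM), Multiset.prod_add, Multiset.prod_replicate,
    one_pow, one_mul, prod_congr rfl fun i hi => congrArg factorial (hcount i hi),
    Multiset.count_add, Multiset.count_replicate_self, Multiset.count_eq_zero.2 hM, add_zero]
  ring

lemma Nat.Partition.parts_eq_replicate_add_filter {n : ℕ} (mu : n.Partition) :
    mu.parts = Multiset.replicate (n - (mu.parts.filter (· ≠ 1)).sum) 1 +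
      mu.parts.filter (· ≠ 1) := by
  have hsplit := Multiset.filter_add_not (· = 1) mu.parts
  simp only [Multiset.filter_eq', ← ne_eq] at hsplit
  have hsum := congrArg Multiset.sum hsplit
  rw [Multiset.sum_add, Multiset.sum_replicate, smul_eq_mul, mul_one, mu.parts_sum] at hsum
  conv_lhs => rw [← hsplit]
  congr 2
  omega

lemma partP_two_div_partZ {n : ℕ} (mu : n.Partition) :
    (partP 2 mu.parts : ℚ) / partZ mu.parts =
      (catalan (n - 1) : ℚ) ^ 2 * n ! / 4 ^ (n - 1) *
        (n.descFactorial (mu.parts.filter (· ≠ 1)).sum /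
          (partZ (mu.parts.filter (· ≠ 1)) *
            gapSq n ((mu.parts.filter (· ≠ 1)).sort (· ≤ ·)).reverse)) := by
  have hparts := mu.parts_eq_replicate_add_filter
  set M := mu.parts.filter (· ≠ 1)
  set r := n - M.sum
  have hM : ∀ p ∈ M, 1 ≤ p := fun p hp => mu.parts_pos (Multiset.mem_of_mem_filter hp)
  have hsort : mu.parts.sort (· ≤ ·) = List.replicate r 1 ++ M.sort (· ≤ ·) := by
    rw [hparts, Multiset.sort_replicate_add _ _ hM]
  have hkey := prefixSq_mul_gapSq_reverse (mu.parts.sort (· ≤ ·)) fun p hp =>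
    mu.parts_pos ((Multiset.mem_sort _).1 hp)
  rw [← Multiset.sum_coe, Multiset.sort_eq, mu.parts_sum, hsort, List.reverse_append,
    List.reverse_replicate, gapSq_append_replicate_one, ← hsort] at hkey
  have hgap : gapSq n (M.sort (· ≤ ·)).reverse ≠ 0 := by
    rintro h
    rw [h, mul_zero] at hkey
    exact (oddSq_pos _).ne hkey
  have hle : M.sum ≤ n := by
    have h := congrArg Multiset.sum hparts
    rw [Multiset.sum_add, Multiset.sum_replicate, smul_eq_mul, mul_one, mu.parts_sum] at h
    omega
  have hdesc : (n.descFactorial M.sum : ℚ) * r ! = n ! := by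
    exact_mod_cast (mul_comm _ _).trans (factorial_mul_descFactorial hle)
  have hdesc₀ : (n.descFactorial M.sum : ℚ) ≠ 0 :=
    Nat.cast_ne_zero.2 fun h => (descFactorial_eq_zero_iff_lt.1 h).not_ge hle
  have hZ : (partZ M : ℚ) ≠ 0 :=
    Nat.cast_ne_zero.2 (partZ_pos M fun h => (hM 0 h).not_gt one_pos).ne'
  have hZparts : partZ mu.parts = r ! * partZ M := by
    rw [hparts, partZ_replicate_one_add _ (by simp [M])]
  rw [partP_two_eq_prefixSq _ fun p => mu.parts_pos, hZparts,
    catalan_sq_mul_factorial_div_four_pow, ← hdesc, ← hkey]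
  push_cast
  field_simp

lemma Nat.Partition.bijOn_filter_ne_one (n : ℕ) (P : ℕ → Prop) (hP : P 1) :
    Set.BijOn (fun mu : n.Partition => mu.parts.filter (· ≠ 1))
      {mu | ∀ p ∈ mu.parts, P p} {M | M.sum ≤ n ∧ ∀ p ∈ M, P p ∧ 1 < p} := by
  refine ⟨fun mu hmu => ⟨?_, fun p hp => ?_⟩, fun mu _ nu _ h => ?_, fun M ⟨hn, hM⟩ => ?_⟩
  · calc (mu.parts.filter (· ≠ 1)).sum
        ≤ (mu.parts.filter (· ≠ 1)).sum + (mu.parts.filter fun p => ¬p ≠ 1).sum :=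
          Nat.le_add_right _ _
      _ = n := by rw [← Multiset.sum_add, Multiset.filter_add_not, mu.parts_sum]
  · have hp' := Multiset.mem_filter.1 hp
    exact ⟨hmu p hp'.1, lt_of_le_of_ne (mu.parts_pos hp'.1) (Ne.symm hp'.2)⟩
  · rw [Nat.Partition.ext_iff, mu.parts_eq_replicate_add_filter, nu.parts_eq_replicate_add_filter]
    dsimp only at h
    rw [h]
  · have mem_one_or_mem {p : ℕ} (hp : p ∈ Multiset.replicate (n - M.sum) 1 + M) :
        p = 1 ∨ p ∈ M :=
      (Multiset.mem_add.1 hp).imp_left Multiset.eq_of_mem_replicate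
    refine ⟨⟨Multiset.replicate (n - M.sum) 1 + M, fun hp => ?_, ?_⟩, fun p hp => ?_, ?_⟩
    · rcases mem_one_or_mem hp with rfl | hp
      exacts [one_pos, (hM _ hp).2.trans' one_pos]
    · rw [Multiset.sum_add, Multiset.sum_replicate, smul_eq_mul, mul_one, Nat.sub_add_cancel hn]
    · rcases mem_one_or_mem hp with rfl | hp
      exacts [hP, (hM p hp).1]
    · dsimp only
      rw [Multiset.filter_add, Multiset.filter_eq_nil.2 fun p hp => by
        simp [Multiset.eq_of_mem_replicate hp], zero_add, Multiset.filter_eq_self]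
      exact fun p hp => (hM p hp).2.ne'

lemma exists_eq_two_pow_and_one_lt_iff (p : ℕ) :
    (∃ i : ℕ, p = 2 ^ i) ∧ 1 < p ↔ ∃ i : ℕ, 1 ≤ i ∧ p = 2 ^ i := by
  constructor
  · rintro ⟨⟨i, rfl⟩, hp⟩
    exact ⟨i, Nat.one_le_iff_ne_zero.2 (by rintro rfl; simp at hp), rfl⟩
  · rintro ⟨i, hi, rfl⟩
    exact ⟨⟨i, rfl⟩, Nat.one_lt_two_pow_iff.2 (by omega)⟩

theorem tanglegram_count_alt_general (n : ℕ) :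
    binPartSum 2 n =
      ((catalan (n - 1) : ℚ) ^ 2 * (n.factorial : ℚ) / 4 ^ (n - 1)) *
        ∑ᶠ (M : Multiset ℕ) (_ : M.sum ≤ n ∧ ∀ p ∈ M, ∃ i : ℕ, 1 ≤ i ∧ p = 2 ^ i),
          (n.descFactorial M.sum : ℚ) /
            ((partZ M : ℚ) *
              ∏ i ∈ Finset.range (M.sort (· ≤ ·)).reverse.length,
                ∏ j ∈ Finset.range ((M.sort (· ≤ ·)).reverse.getD i 0 - 1),
                  (2 * (n : ℚ) - 2 * (((M.sort (· ≤ ·)).reverse.take i).sum : ℚ) -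
                      2 * ((j : ℚ) + 1) - 1) ^ 2) := by
  have hbij := Nat.Partition.bijOn_filter_ne_one n (fun p => ∃ i : ℕ, p = 2 ^ i) ⟨0, rfl⟩
  simp only [exists_eq_two_pow_and_one_lt_iff] at hbij
  exact (finsum_mem_eq_of_bijOn _ hbij fun mu _ => partP_two_div_partZ mu).trans
    (mul_finsum_mem _ _).symm

/-- **Corollary 9**: `Σ_λ P_2(λ)/z_λ` over binary partitions `λ` of `n` equals
`(C_{n-1}² n!/4^{n-1}) · Σ_μ n(n-1)⋯(n-|μ|+1) / (z_μ ∏_{i=1}^{ℓ(μ)} ∏_{j=1}^{μ_i - 1}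
(2n - 2(μ_1 + ⋯ + μ_{i-1}) - 2j - 1)²)`, summed over binary partitions `μ` (as multisets,
including the empty one) whose parts are powers of `2` that are at least `2` and with
`|μ| ≤ n`; `μ_1 ≥ μ_2 ≥ …` is the decreasing arrangement of `μ`. -/
theorem tanglegram_count_alt (n : ℕ) (hn : 1 ≤ n) :
    binPartSum 2 n =
      ((catalan (n - 1) : ℚ) ^ 2 * (n.factorial : ℚ) / 4 ^ (n - 1)) *
        ∑ᶠ (M : Multiset ℕ) (_ : M.sum ≤ n ∧ ∀ p ∈ M, ∃ i : ℕ, 1 ≤ i ∧ p = 2 ^ i),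
          (n.descFactorial M.sum : ℚ) /
            ((partZ M : ℚ) *
              ∏ i ∈ Finset.range (M.sort (· ≤ ·)).reverse.length,
                ∏ j ∈ Finset.range ((M.sort (· ≤ ·)).reverse.getD i 0 - 1),
                  (2 * (n : ℚ) - 2 * (((M.sort (· ≤ ·)).reverse.take i).sum : ℚ) -
                      2 * ((j : ℚ) + 1) - 1) ^ 2) :=
  tanglegram_count_alt_general n
end

section
/- For every n ≥ 1, Σ_λ P_2(λ)/z_λ (sum over binary partitions λ of n) equals r(0, n, 0)/(2n−1)², where r is the recursively defined function given in the context. (Equivalently, the number of tanglegrams of size n is r(0,n,0)/f²(n) with f²(s) = (2s−1)².) -/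
/-- `c^k(h, m, s) = ∏_{j=1}^{m} f^k(s + j·2^h)/(j·2^h)` where `f^k(s) = (2s-1)^k`;
in particular `c^k(h, 0, s) = 1`. -/
def cfun (k h m s : ℕ) : ℚ :=
  ∏ j ∈ Finset.Icc 1 m,
    (2 * ((s : ℚ) + (j : ℚ) * (2 : ℚ) ^ h) - 1) ^ k / ((j : ℚ) * (2 : ℚ) ^ h)

/-- `r^k(h, n, s) = Σ_{m = 0, n - m even}^{n} c^k(h, m, s) · r^k(h+1, (n-m)/2, s + m·2^h)`
with base case `r^k(h, 0, s) = 1`. -/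
def rfun (k : ℕ) (h n s : ℕ) : ℚ :=
  if _hn : n = 0 then 1
  else
    ∑ m ∈ (Finset.range (n + 1)).filter fun m => (n - m) % 2 = 0,
      cfun k h m s * rfun k (h + 1) ((n - m) / 2) (s + m * 2 ^ h)
termination_by n
decreasing_by omega

/-!
Unfolding the recursion for `r` turns it into a sum over binary partitions: a binary partition
of `n` consists of `m` ones together with twice a binary partition of `(n - m)/2`, and
`c(h, m, s)` is exactly the contribution of `m` parts equal to `2^h` placed after parts of total
`s`. Hence `r(h, n, s) = Σ_λ ∏_t f^k(s + 2^h t) / (2^{h ℓ(λ)} z_λ)`, where `t` runs over the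
prefix sums of the increasing arrangement of `λ`. At `h = s = 0` these prefix sums are the tail
sums occurring in `P_k(λ)` together with `n` itself, which contributes the factor `f^k(n)`.
-/

namespace Tanglegram

open Finset

def prefixProd (k h : ℕ) : ℕ → List ℕ → ℚ
  | _, [] => 1
  | s, a :: l => (2 * ((s : ℚ) + a * 2 ^ h) - 1) ^ k * prefixProd k h (s + a * 2 ^ h) l

theorem prefixProd_replicate_one_append (k h m s : ℕ) (L : List ℕ) :
    prefixProd k h s (List.replicate m 1 ++ L) =
      (∏ j ∈ Icc 1 m, (2 * ((s : ℚ) + j * 2 ^ h) - 1) ^ k) *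
        prefixProd k h (s + m * 2 ^ h) L := by
  induction m generalizing s L with
  | zero => simp
  | succ m ih =>
    have hshift : s + m * 2 ^ h + 1 * 2 ^ h = s + (m + 1) * 2 ^ h := by ring
    rw [List.replicate_succ', List.append_assoc, ih, List.singleton_append, prefixProd,
      prod_Icc_succ_top (by omega), hshift]
    push_cast
    ring

theorem prefixProd_map_two_mul (k h s : ℕ) (L : List ℕ) :
    prefixProd k h s (L.map (2 * ·)) = prefixProd k (h + 1) s L := by
  induction L generalizing s with
  | nil => rfl
  | cons a l ih =>
    have hshift : s + 2 * a * 2 ^ h = s + a * 2 ^ (h + 1) := by ring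
    simp only [List.map_cons, prefixProd, ih, hshift]
    push_cast
    ring

theorem prefixProd_eq_prod_range (k h s : ℕ) (L : List ℕ) :
    prefixProd k h s L =
      ∏ j ∈ range L.length, (2 * ((s : ℚ) + (L.take (j + 1)).sum * 2 ^ h) - 1) ^ k := by
  induction L generalizing s with
  | nil => rfl
  | cons a l ih =>
    rw [prefixProd, ih, List.length_cons, prod_range_succ', mul_comm]
    simp only [List.take_succ_cons, List.sum_cons, List.take_zero, List.sum_nil, add_zero]
    push_cast
    ring_nf

theorem partZ_add {A B : Multiset ℕ} (hAB : Disjoint A B) :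
    partZ (A + B) = partZ A * partZ B := by
  have hcount_left : ∀ i ∈ A.dedup, (A + B).count i = A.count i := fun i hi => by
    rw [Multiset.count_add, Multiset.count_eq_zero.2
      (Multiset.disjoint_left.1 hAB (Multiset.mem_dedup.1 hi)), add_zero]
  have hcount_right : ∀ i ∈ B.dedup, (A + B).count i = B.count i := fun i hi => by
    rw [Multiset.count_add, Multiset.count_eq_zero.2
      (Multiset.disjoint_right.1 hAB (Multiset.mem_dedup.1 hi)), zero_add]
  unfold partZ
  rw [Multiset.prod_add, Multiset.Disjoint.dedup_add hAB, Multiset.map_add, Multiset.prod_add,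
    Multiset.map_congr rfl fun i hi => congrArg Nat.factorial (hcount_left i hi),
    Multiset.map_congr rfl fun i hi => congrArg Nat.factorial (hcount_right i hi)]
  ring

theorem partZ_replicate (a m : ℕ) : partZ (Multiset.replicate m a) = a ^ m * m.factorial := by
  rcases Nat.eq_zero_or_pos m with rfl | hm
  · simp [partZ]
  have hdedup : (Multiset.replicate m a).dedup = {a} := by
    rw [← Multiset.coe_replicate, Multiset.coe_dedup, List.replicate_dedup hm.ne']
    rfl
  simp [partZ, hdedup]

theorem partZ_map_mul {c : ℕ} (hc : c ≠ 0) (N : Multiset ℕ) :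
    partZ (N.map (c * ·)) = c ^ Multiset.card N * partZ N := by
  have hinj : Function.Injective (c * ·) := mul_right_injective₀ hc
  unfold partZ
  rw [Multiset.prod_map_mul, Multiset.dedup_map_of_injective hinj, Multiset.map_map]
  simp only [Function.comp_def, Multiset.count_map_eq_count' _ _ hinj, Multiset.map_const',
    Multiset.prod_replicate, Multiset.map_id']
  ring

theorem sort_replicate_add {a : ℕ} (m : ℕ) {X : Multiset ℕ} (hX : ∀ b ∈ X, a ≤ b) :
    (Multiset.replicate m a + X).sort (· ≤ ·) = List.replicate m a ++ X.sort (· ≤ ·) := by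
  induction m with
  | zero => simp
  | succ m ih =>
    rw [Multiset.replicate_succ, Multiset.cons_add, Multiset.sort_cons, ih]
    · rfl
    · intro b hb
      rcases Multiset.mem_add.1 hb with hb | hb
      · exact (Multiset.eq_of_mem_replicate hb).ge
      · exact hX b hb

theorem sort_map_mul {c : ℕ} (hc : c ≠ 0) (N : Multiset ℕ) :
    (N.map (c * ·)).sort (· ≤ ·) = (N.sort (· ≤ ·)).map (c * ·) :=
  (Multiset.map_sort (c * ·) N (· ≤ ·) (· ≤ ·) fun _ _ _ _ =>
    (Nat.mul_le_mul_left_iff (Nat.pos_of_ne_zero hc)).symm).symm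

theorem cfun_eq_prod_div (k h m s : ℕ) :
    cfun k h m s = (∏ j ∈ Icc 1 m, (2 * ((s : ℚ) + j * 2 ^ h) - 1) ^ k) /
      (2 ^ (h * m) * m.factorial) := by
  have hfact : ∏ j ∈ Icc 1 m, (j : ℚ) = m.factorial := by
    rw [← Ico_add_one_right_eq_Icc, ← prod_Ico_id_eq_factorial, Nat.cast_prod]
  rw [cfun, prod_div_distrib, prod_mul_distrib, prod_const, Nat.card_Icc, Nat.add_sub_cancel,
    hfact, ← pow_mul]
  ring

/-- The weight of a partition `M` in the expansion of `rfun k h · s`; for `h = s = 0` it is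
`P_k(M) f^k(M.sum) / z_M`. -/
noncomputable def binWeight (k h s : ℕ) (M : Multiset ℕ) : ℚ :=
  prefixProd k h s (M.sort (· ≤ ·)) / (2 ^ (h * Multiset.card M) * partZ M)

theorem binWeight_replicate_one_add_map_two_mul (k h s m : ℕ) {N : Multiset ℕ}
    (hN : ∀ x ∈ N, 0 < x) :
    binWeight k h s (Multiset.replicate m 1 + N.map (2 * ·)) =
      cfun k h m s * binWeight k (h + 1) (s + m * 2 ^ h) N := by
  have hsort := sort_replicate_add (a := 1) m (X := N.map (2 * ·)) fun b hb => by
    obtain ⟨x, hx, rfl⟩ := Multiset.mem_map.1 hb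
    have := hN x hx
    omega
  have hdisj : Disjoint (Multiset.replicate m 1) (N.map (2 * ·)) :=
    Multiset.disjoint_left.2 fun ha hmem => by
      obtain ⟨x, -, hx⟩ := Multiset.mem_map.1 hmem
      rw [Multiset.eq_of_mem_replicate ha] at hx
      omega
  rw [binWeight, binWeight, hsort, sort_map_mul two_ne_zero, prefixProd_replicate_one_append,
    prefixProd_map_two_mul, partZ_add hdisj, partZ_replicate, partZ_map_mul two_ne_zero,
    cfun_eq_prod_div]
  simp only [Multiset.card_add, Multiset.card_replicate, Multiset.card_map]
  push_cast
  ring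

open scoped Classical in
noncomputable def binParts (n : ℕ) : Finset (Multiset ℕ) :=
  ({μ : n.Partition | ∀ p ∈ μ.parts, ∃ i : ℕ, p = 2 ^ i} : Finset n.Partition).image
    Nat.Partition.parts

theorem mem_binParts {n : ℕ} {M : Multiset ℕ} :
    M ∈ binParts n ↔ M.sum = n ∧ ∀ p ∈ M, ∃ i : ℕ, p = 2 ^ i := by
  classical
  simp only [binParts, mem_image, mem_filter, mem_univ, true_and]
  constructor
  · rintro ⟨μ, hμ, rfl⟩
    exact ⟨μ.parts_sum, hμ⟩
  · rintro ⟨hsum, hbin⟩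
    refine ⟨⟨M, fun hp => ?_, hsum⟩, hbin, rfl⟩
    obtain ⟨i, rfl⟩ := hbin _ hp
    positivity

theorem pos_of_mem_binParts {n p : ℕ} {M : Multiset ℕ} (hM : M ∈ binParts n) (hp : p ∈ M) :
    0 < p := by
  obtain ⟨i, rfl⟩ := (mem_binParts.1 hM).2 p hp
  positivity

theorem binPartSum_eq_sum_binParts (k n : ℕ) :
    binPartSum k n = ∑ M ∈ binParts n, (partP k M : ℚ) / partZ M := by
  classical
  rw [binPartSum, binParts, sum_image fun _ _ _ _ => Nat.Partition.ext]
  exact finsum_cond_eq_sum_of_cond_iff _ fun _ => by simp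

def halveParts (M : Multiset ℕ) : Multiset ℕ :=
  (M.filter (· ≠ 1)).map (· / 2)

theorem count_one_replicate_add_map_two_mul (m : ℕ) (N : Multiset ℕ) :
    (Multiset.replicate m 1 + N.map (2 * ·)).count 1 = m := by
  rw [Multiset.count_add, Multiset.count_replicate_self, Multiset.count_eq_zero.2, add_zero]
  intro hmem
  obtain ⟨x, -, hx⟩ := Multiset.mem_map.1 hmem
  omega

theorem halveParts_replicate_one_add_map_two_mul (m : ℕ) (N : Multiset ℕ) :
    halveParts (Multiset.replicate m 1 + N.map (2 * ·)) = N := by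
  have hfilter : (Multiset.replicate m 1 + N.map (2 * ·)).filter (· ≠ 1) = N.map (2 * ·) := by
    rw [Multiset.filter_add, Multiset.filter_eq_nil.2 fun a ha => by
      simp [Multiset.eq_of_mem_replicate ha], zero_add, Multiset.filter_eq_self]
    intro a ha
    obtain ⟨x, -, rfl⟩ := Multiset.mem_map.1 ha
    omega
  rw [halveParts, hfilter, Multiset.map_map]
  exact (Multiset.map_congr rfl fun x _ => by simp).trans (Multiset.map_id N)

theorem replicate_one_add_map_two_mul_halveParts {M : Multiset ℕ}
    (hM : ∀ p ∈ M, ∃ i : ℕ, p = 2 ^ i) :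
    Multiset.replicate (M.count 1) 1 + (halveParts M).map (2 * ·) = M := by
  have heven : ∀ x ∈ M.filter (· ≠ 1), 2 * (x / 2) = x := fun x hx => by
    obtain ⟨hxM, hx1⟩ := Multiset.mem_filter.1 hx
    obtain ⟨_ | i, rfl⟩ := hM x hxM
    · exact absurd rfl hx1
    · rw [pow_succ, Nat.mul_div_cancel _ two_pos, mul_comm]
  rw [halveParts, Multiset.map_map,
    Multiset.map_congr (f := (2 * ·) ∘ (· / 2)) (g := id) rfl heven, Multiset.map_id,
    ← Multiset.filter_eq', Multiset.filter_add_not]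

theorem halveParts_binary {M : Multiset ℕ} (hM : ∀ p ∈ M, ∃ i : ℕ, p = 2 ^ i) :
    ∀ p ∈ halveParts M, ∃ i : ℕ, p = 2 ^ i := by
  intro p hp
  obtain ⟨x, hx, rfl⟩ := Multiset.mem_map.1 hp
  obtain ⟨hxM, hx1⟩ := Multiset.mem_filter.1 hx
  obtain ⟨_ | i, rfl⟩ := hM x hxM
  · exact absurd rfl hx1
  · exact ⟨i, by rw [pow_succ, Nat.mul_div_cancel _ two_pos]⟩

theorem replicate_one_add_map_two_mul_binary (m : ℕ) {N : Multiset ℕ}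
    (hN : ∀ p ∈ N, ∃ i : ℕ, p = 2 ^ i) :
    ∀ p ∈ Multiset.replicate m 1 + N.map (2 * ·), ∃ i : ℕ, p = 2 ^ i := by
  intro p hp
  rcases Multiset.mem_add.1 hp with hp | hp
  · exact ⟨0, Multiset.eq_of_mem_replicate hp⟩
  · obtain ⟨x, hx, rfl⟩ := Multiset.mem_map.1 hp
    obtain ⟨i, rfl⟩ := hN x hx
    exact ⟨i + 1, (pow_succ' 2 i).symm⟩

/-- A binary partition of `n` is `m` ones together with twice a binary partition of `(n - m)/2`. -/
theorem sum_binParts_eq_sum_sum (n : ℕ) (f : Multiset ℕ → ℚ) :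
    ∑ M ∈ binParts n, f M =
      ∑ m ∈ (range (n + 1)).filter (fun m => (n - m) % 2 = 0),
        ∑ N ∈ binParts ((n - m) / 2), f (Multiset.replicate m 1 + N.map (2 * ·)) := by
  rw [sum_sigma']
  refine (sum_nbij' (fun p : (_ : ℕ) × Multiset ℕ => Multiset.replicate p.1 1 + p.2.map (2 * ·))
    (fun M => ⟨M.count 1, halveParts M⟩) ?_ ?_ ?_ ?_ fun _ _ => rfl).symm
  · rintro ⟨m, N⟩ hp
    simp only [mem_sigma, mem_filter, mem_range, mem_binParts] at hp ⊢
    obtain ⟨⟨hm, heven⟩, hsum, hbin⟩ := hp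
    refine ⟨?_, replicate_one_add_map_two_mul_binary m hbin⟩
    rw [Multiset.sum_add, Multiset.sum_replicate, Multiset.sum_map_mul_left, Multiset.map_id',
      hsum, smul_eq_mul, mul_one]
    omega
  · intro M hM
    simp only [mem_sigma, mem_filter, mem_range, mem_binParts] at hM ⊢
    obtain ⟨hsum, hbin⟩ := hM
    have hsplit := congrArg Multiset.sum (replicate_one_add_map_two_mul_halveParts hbin)
    rw [Multiset.sum_add, Multiset.sum_replicate, Multiset.sum_map_mul_left, Multiset.map_id',
      hsum, smul_eq_mul, mul_one] at hsplit
    exact ⟨⟨by omega, by omega⟩, by omega, halveParts_binary hbin⟩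
  · rintro ⟨m, N⟩ -
    rw [count_one_replicate_add_map_two_mul, halveParts_replicate_one_add_map_two_mul]
  · intro M hM
    exact replicate_one_add_map_two_mul_halveParts (mem_binParts.1 hM).2

theorem binParts_zero : binParts 0 = {0} := by
  ext M
  rw [mem_binParts, mem_singleton, Multiset.sum_eq_zero_iff]
  constructor
  · rintro ⟨hzero, hbin⟩
    refine Multiset.eq_zero_of_forall_notMem fun p hp => ?_
    obtain ⟨i, rfl⟩ := hbin p hp
    exact pow_ne_zero i two_ne_zero (hzero _ hp)
  · rintro rfl
    simp

theorem rfun_eq_sum_binWeight (k n : ℕ) :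
    ∀ h s, rfun k h n s = ∑ M ∈ binParts n, binWeight k h s M := by
  induction n using Nat.strong_induction_on with
  | _ n ih =>
    intro h s
    rcases Nat.eq_zero_or_pos n with rfl | hn
    · simp [rfun, binParts_zero, binWeight, prefixProd, partZ]
    rw [rfun, dif_neg hn.ne', sum_binParts_eq_sum_sum]
    refine sum_congr rfl fun m hm => ?_
    rw [mem_filter, mem_range] at hm
    rw [ih _ (by omega), mul_sum]
    exact sum_congr rfl fun N hN =>
      (binWeight_replicate_one_add_map_two_mul k h s m fun _ => pos_of_mem_binParts hN).symm

theorem one_le_sum_take_succ {L : List ℕ} (hL : ∀ x ∈ L, 0 < x) (hne : L ≠ []) (j : ℕ) :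
    1 ≤ (L.take (j + 1)).sum := by
  obtain ⟨a, l, rfl⟩ := List.exists_cons_of_ne_nil hne
  rw [List.take_succ_cons, List.sum_cons]
  have := hL a List.mem_cons_self
  omega

/-- The last prefix sum, `M.sum`, is the one that `partP` omits. -/
theorem prefixProd_sort_eq_partP_mul (k : ℕ) {M : Multiset ℕ} (hM : ∀ x ∈ M, 0 < x)
    (hM0 : M ≠ 0) :
    prefixProd k 0 0 (M.sort (· ≤ ·)) = partP k M * (2 * (M.sum : ℚ) - 1) ^ k := by
  set L := M.sort (· ≤ ·) with hL
  have hLpos : ∀ x ∈ L, 0 < x := fun x hx => hM x ((Multiset.mem_sort _).1 hx)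
  have hLne : L ≠ [] := fun h => hM0 <| by
    rw [← Multiset.sort_eq M (· ≤ ·), ← hL, h, Multiset.coe_nil]
  have hLsum : L.sum = M.sum := by rw [← Multiset.sum_coe, hL, Multiset.sort_eq]
  obtain ⟨ℓ, hℓ⟩ : ∃ ℓ, L.length = ℓ + 1 :=
    Nat.exists_eq_succ_of_ne_zero (List.length_pos_iff.2 hLne).ne'
  rw [prefixProd_eq_prod_range, hℓ, prod_range_succ, ← hℓ, List.take_length, hLsum, partP, ← hL,
    hℓ, Nat.add_sub_cancel, Nat.cast_prod]
  congr 1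
  · refine prod_congr rfl fun j _ => ?_
    have := one_le_sum_take_succ hLpos hLne j
    push_cast [Nat.cast_sub (by omega : 1 ≤ 2 * (L.take (j + 1)).sum)]
    ring
  · push_cast
    ring

theorem binPartSum_eq_rfun_div (k : ℕ) {n : ℕ} (hn : 1 ≤ n) :
    binPartSum k n = rfun k 0 n 0 / (2 * (n : ℚ) - 1) ^ k := by
  have hf : (2 * (n : ℚ) - 1) ^ k ≠ 0 := by
    have : (1 : ℚ) ≤ n := by exact_mod_cast hn
    exact pow_ne_zero _ (by linarith)
  rw [binPartSum_eq_sum_binParts, rfun_eq_sum_binWeight, sum_div]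
  refine sum_congr rfl fun M hM => ?_
  obtain ⟨hsum, -⟩ := mem_binParts.1 hM
  have hM0 : M ≠ 0 := by
    rintro rfl
    rw [Multiset.sum_zero] at hsum
    omega
  rw [binWeight, prefixProd_sort_eq_partP_mul k (fun _ => pos_of_mem_binParts hM) hM0, hsum,
    zero_mul, pow_zero, one_mul, mul_div_right_comm,
    mul_div_cancel_right₀ _ hf]

end Tanglegram

/-- **Lemma 11**: for `n ≥ 1`, the number of tanglegrams of size `n`, i.e.
`Σ_λ P_2(λ)/z_λ` over binary partitions `λ` of `n`, equals `r(0, n, 0)/f²(n)` with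
`f²(s) = (2s-1)²`. -/
theorem tanglegram_count_recurrence (n : ℕ) (hn : 1 ≤ n) :
    binPartSum 2 n = rfun 2 0 n 0 / (2 * (n : ℚ) - 1) ^ 2 :=
  Tanglegram.binPartSum_eq_rfun_div 2 hn
end

section
/- For every n ≥ 2, 2·(2n−3)!! = Σ_{k=1}^{n−1} binom(n, k)·(2k−3)!!·(2n−2k−3)!!, where the double factorial (2m−1)!! = 1·3·5⋯(2m−1) for m ≥ 1 and by convention (−1)!! = 1. -/
/-!
Multiplying by `2 ^ (n - 2)` turns every double factorial into a Catalan number: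
`2 ^ j * (2j - 1)‼ = catalan j * (j + 1)!`, because `(2j)! = (2j)‼ * (2j - 1)‼` and
`(2j)‼ = 2 ^ j * j!`. The binomial coefficient then combines the factorials of the two
halves into `n!`, and the identity becomes Segner's recurrence
`catalan (n - 1) = ∑ catalan i * catalan (n - 2 - i)`.
-/

open Finset Nat

namespace Nat

theorem two_pow_mul_doubleFactorial_two_mul_sub_one_mul_factorial (j : ℕ) :
    2 ^ j * (2 * j - 1)‼ * j ! = (2 * j)! := by
  cases j with
  | zero => rfl
  | succ i =>
    rw [show (2 * (i + 1))! = (2 * (i + 1))‼ * (2 * i + 1)‼ from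
        factorial_eq_mul_doubleFactorial (2 * i + 1),
      doubleFactorial_two_mul, show 2 * (i + 1) - 1 = 2 * i + 1 by omega]
    ring

theorem two_pow_mul_doubleFactorial_two_mul_sub_one (j : ℕ) :
    2 ^ j * (2 * j - 1)‼ = catalan j * (j + 1)! := by
  apply Nat.eq_of_mul_eq_mul_right (factorial_pos j)
  have hcentral : j.centralBinom * j ! * j ! = (2 * j)! := by
    simpa [centralBinom, two_mul] using choose_mul_factorial_mul_factorial (le_add_right j j)
  rw [two_pow_mul_doubleFactorial_two_mul_sub_one_mul_factorial, ← hcentral,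
    ← succ_mul_catalan_eq_centralBinom, factorial_succ]
  ring

theorem two_pow_mul_choose_mul_doubleFactorial_mul_doubleFactorial (i j : ℕ) :
    2 ^ (i + j) * ((i + j + 2).choose (i + 1) * (2 * i - 1)‼ * (2 * j - 1)‼) =
      (i + j + 2)! * (catalan i * catalan j) := by
  have hfactorial : (i + j + 2).choose (i + 1) * (i + 1)! * (j + 1)! = (i + j + 2)! := by
    simpa [show i + j + 2 - (i + 1) = j + 1 by omega] using
      choose_mul_factorial_mul_factorial (show i + 1 ≤ i + j + 2 by omega)
  calc 2 ^ (i + j) * ((i + j + 2).choose (i + 1) * (2 * i - 1)‼ * (2 * j - 1)‼)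
      = (i + j + 2).choose (i + 1) * (2 ^ i * (2 * i - 1)‼) * (2 ^ j * (2 * j - 1)‼) := by ring
    _ = (i + j + 2).choose (i + 1) * (i + 1)! * (j + 1)! * (catalan i * catalan j) := by
      rw [two_pow_mul_doubleFactorial_two_mul_sub_one, two_pow_mul_doubleFactorial_two_mul_sub_one]
      ring
    _ = (i + j + 2)! * (catalan i * catalan j) := by rw [hfactorial]

end Nat

/-- The convention `(-1)!! = 1` comes from truncated subtraction: `2 * 1 - 3 = 0`, `0‼ = 1`. -/
theorem doubleFactorial_catalan_recurrence (n : ℕ) (hn : 2 ≤ n) :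
    2 * Nat.doubleFactorial (2 * n - 3) =
      ∑ k ∈ Finset.Icc 1 (n - 1),
        n.choose k * Nat.doubleFactorial (2 * k - 3) *
          Nat.doubleFactorial (2 * n - 2 * k - 3) := by
  obtain ⟨m, rfl⟩ : ∃ m, n = m + 2 := ⟨n - 2, by omega⟩
  apply Nat.eq_of_mul_eq_mul_left (pow_pos two_pos m)
  have hterm (i : ℕ) (hi : i ∈ range (m + 1)) :
      2 ^ m * ((m + 2).choose (1 + i) * (2 * (1 + i) - 3)‼ * (2 * (m + 2) - 2 * (1 + i) - 3)‼) =
        (m + 2)! * (catalan i * catalan (m - i)) := by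
    obtain ⟨j, rfl⟩ : ∃ j, m = i + j := ⟨m - i, by have := mem_range.mp hi; omega⟩
    rw [show 2 * (1 + i) - 3 = 2 * i - 1 by omega, add_comm 1 i,
      show 2 * (i + j + 2) - 2 * (i + 1) - 3 = 2 * j - 1 by omega, Nat.add_sub_cancel_left]
    exact two_pow_mul_choose_mul_doubleFactorial_mul_doubleFactorial i j
  calc 2 ^ m * (2 * (2 * (m + 2) - 3)‼) = 2 ^ (m + 1) * (2 * (m + 1) - 1)‼ := by
        rw [show 2 * (m + 2) - 3 = 2 * (m + 1) - 1 by omega]; ring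
    _ = (m + 2)! * ∑ i ∈ range (m + 1), catalan i * catalan (m - i) := by
      rw [two_pow_mul_doubleFactorial_two_mul_sub_one, catalan_succ',
        Nat.sum_antidiagonal_eq_sum_range_succ_mk, mul_comm]
    _ = _ := by
      rw [← Ico_add_one_right_eq_Icc, sum_Ico_eq_sum_range, mul_sum, mul_sum,
        show m + 2 - 1 + 1 - 1 = m + 1 by omega]
      exact (sum_congr rfl hterm).symm
end
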